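/- Over the open set Δ^{n+1} − Y_p, the correspondence Γ_p is the graph of the map ψ : Δ^{n+1} − Y_p → U_p, ψ(z) = (t(z); (z_{n+1}/(1 − z_{n+1})) p(t(z))) with t(z) = (ε_0(z)/z_1, ..., ε_{n-1}(z)/z_n); that is, for z ∈ Δ^{n+1} − Y_p, the point ((t,λ), z) lies on Γ_p if and only if (t,λ) = ψ(z). -/
import Mathlib

open MvPolynomial

/-- Over `Δ^{n+1} − Y_p`, the correspondence `Γ_p` is the graph of `ψ`:
for `z ∈ Δ^{n+1} − Y_p` and `(t,λ) ∈ U_p`, the point `((t,λ), z)` satisfies the defining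
equations of `Γ_p` if and only if `(t,λ) = ψ(z)`. -/
theorem stmt_13 (n : ℕ) (p : MvPolynomial (Fin n) ℂ)
    (tz : (Fin (n+2) → ℂ) → Fin n → ℂ)
    (htz : ∀ z k, tz z k =
      (∑ i : Fin (n+2), if (i : ℕ) ≤ (k : ℕ) then z i else 0) /
        z ⟨(k : ℕ) + 1, by have := k.isLt; omega⟩)
    (ψ : (Fin (n+2) → ℂ) → (Fin n → ℂ) × ℂ)
    (hψ : ∀ z, ψ z = (tz z,
      z ⟨n+1, by omega⟩ / (1 - z ⟨n+1, by omega⟩) * eval (tz z) p))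
    (z : Fin (n+2) → ℂ) (hsum : ∑ i, z i = 1)
    (hz : ∀ i, z i ≠ 0)
    (heps : ∀ k : Fin (n+2),
      (∑ i : Fin (n+2), if (i : ℕ) ≤ (k : ℕ) then z i else 0) ≠ 0)
    (hpz : eval (tz z) p ≠ 0)
    (t : Fin n → ℂ) (lam : ℂ)
    (ht : ∀ i, t i ≠ 0) (hpt : eval t p ≠ 0) (hlam : lam ≠ 0) :
    ((z ⟨n+1, by omega⟩ * (lam + eval t p) = lam) ∧
      ∀ j : Fin n,
        (∑ i : Fin (n+2), if (i : ℕ) ≤ (j : ℕ) then z i else 0) =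
          t j * z ⟨(j : ℕ) + 1, by have := j.isLt; omega⟩) ↔
    (t, lam) = ψ z := by
  have hz1 : z ⟨n+1, by omega⟩ ≠ 0 := hz _
  rw [hψ, Prod.mk.injEq]
  constructor
  · rintro ⟨h1, h2⟩
    have hteq : tz z = t := by
      funext k
      rw [htz, h2 k, mul_div_assoc, div_self (hz _), mul_one]
    have hP : eval (tz z) p = eval t p := by rw [hteq]
    have hne : (1 : ℂ) - z ⟨n+1, by omega⟩ ≠ 0 := by
      intro h
      have hz1' : z ⟨n+1, by omega⟩ = 1 := by linear_combination -h
      rw [hz1', one_mul] at h1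
      exact hpt (by linear_combination h1)
    refine ⟨hteq.symm, ?_⟩
    rw [hP]
    field_simp
    linear_combination -h1
  · rintro ⟨ht', hl⟩
    have hne : (1 : ℂ) - z ⟨n+1, by omega⟩ ≠ 0 := by
      intro h
      rw [h, div_zero, zero_mul] at hl
      exact hlam hl
    have hP : eval (tz z) p = eval t p := by rw [ht']
    constructor
    · rw [hl, hP]
      field_simp
      ring_nf
    · intro j
      rw [ht', htz, div_mul_cancel₀ _ (hz _)]
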